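/- arXiv:1404.2307 — 2 statements merged into one kernel-verified Lean document; each statement's English description precedes it below -/
import Mathlib

section
/- Let (T,n) be a Noetherian local domain that is complete in the (y)-adic topology, where y is a nonzero element of n. Let U be a countable set of prime ideals of T such that y ∉ P for each P ∈ U, and let t ∈ n \ n². Then there exists an element a ∈ y²T such that t − a ∉ ⋃{P : P ∈ U}. -/
open IsLocalRing

section Aux

variable {T : Type*} [CommRing T]

/-- Partial sums `∑_{i<N} s(i) y^(i+2)`. -/
def auxSum (y : T) (s : ℕ → Bool) (N : ℕ) : T :=
  ∑ i ∈ Finset.range N, (if s i then y ^ (i + 2) else 0)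

lemma auxSum_term_mem (y : T) (s : ℕ → Bool) (i : ℕ) :
    (if s i then y ^ (i + 2) else 0) ∈ Ideal.span {y} ^ (i + 2) := by
  split
  · rw [Ideal.span_singleton_pow]; exact Ideal.subset_span rfl
  · exact zero_mem _

lemma auxSum_sub_mem (y : T) (s : ℕ → Bool) {m n : ℕ} (h : m ≤ n) :
    auxSum y s n - auxSum y s m ∈ Ideal.span {y} ^ (m + 2) := by
  have : auxSum y s n - auxSum y s m
      = ∑ i ∈ Finset.Ico m n, (if s i then y ^ (i + 2) else 0) := by
    rw [auxSum, auxSum, Finset.sum_Ico_eq_sub _ h]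
  rw [this]
  refine Ideal.sum_mem _ fun i hi => ?_
  have him : m ≤ i := (Finset.mem_Ico.mp hi).1
  exact Ideal.pow_le_pow_right (by omega) (auxSum_term_mem y s i)

lemma auxSum_mem (y : T) (s : ℕ → Bool) (N : ℕ) :
    auxSum y s N ∈ Ideal.span {y} ^ 2 :=
  Ideal.sum_mem _ fun i _ =>
    Ideal.pow_le_pow_right (by omega) (auxSum_term_mem y s i)

end Aux

/-- `ℕ → Bool` is not countable. -/
lemma aux_not_countable_bool : ¬ (Set.univ : Set (ℕ → Bool)).Countable := by
  intro h
  rw [Set.countable_univ_iff] at h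
  have : Countable (Set ℕ) :=
    Countable.of_equiv (ℕ → Bool)
      ((Equiv.arrowCongr (Equiv.refl ℕ) Equiv.propEquivBool).symm)
  obtain ⟨f, hf⟩ := exists_injective_nat (Set ℕ)
  exact Function.cantor_injective f hf

/-- **Prime avoidance in a `(y)`-adically complete Noetherian local domain.**
Let `(T,n)` be a Noetherian local domain that is complete in the `(y)`-adic topology,
where `y` is a nonzero element of `n`.  Let `U` be a countable set of prime ideals of `T`
such that `y ∉ P` for each `P ∈ U`, and let `t ∈ n \ n²`.  Then there exists an element
`a ∈ y²T` such that `t − a ∉ ⋃ {P : P ∈ U}`. -/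
theorem stmt_2 (T : Type*) [CommRing T] [IsDomain T] [IsLocalRing T] [IsNoetherianRing T]
    (y : T) (hy : y ≠ 0) (hymem : y ∈ maximalIdeal T)
    (hcomplete : IsAdicComplete (Ideal.span {y}) T)
    (U : Set (Ideal T)) (hUcount : U.Countable)
    (hUprime : ∀ P ∈ U, P.IsPrime) (hUy : ∀ P ∈ U, y ∉ P)
    (t : T) (ht : t ∈ maximalIdeal T) (ht2 : t ∉ maximalIdeal T ^ 2) :
    ∃ a ∈ Ideal.span {y ^ 2}, ∀ P ∈ U, t - a ∉ P := by
  classical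
  set I : Ideal T := Ideal.span {y} with hI
  have hsmul : ∀ n : ℕ, (I ^ n • ⊤ : Submodule T T) = I ^ n := fun n => by
    rw [Ideal.smul_eq_mul, Ideal.mul_top]
  -- the limit of the partial sums
  have hA : ∀ s : ℕ → Bool, ∃ L : T,
      ∀ n, auxSum y s n ≡ L [SMOD (I ^ n • ⊤ : Submodule T T)] := by
    intro s
    refine hcomplete.toIsPrecomplete.prec (f := auxSum y s) ?_
    intro m n hmn
    rw [SModEq.sub_mem, hsmul]
    have := auxSum_sub_mem y s hmn
    have hle : I ^ (m + 2) ≤ I ^ m := Ideal.pow_le_pow_right (by omega)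
    have : auxSum y s n - auxSum y s m ∈ I ^ m := hle this
    simpa using (neg_mem this)
  choose A hA using hA
  have hAsub : ∀ (s : ℕ → Bool) (n : ℕ), A s - auxSum y s n ∈ I ^ n := by
    intro s n
    have := SModEq.sub_mem.mp (hA s n)
    rw [hsmul] at this
    simpa using (neg_mem this)
  -- difference of two distinct limits is y^(k+2) * unit
  have key : ∀ s s' : ℕ → Bool, s ≠ s' → ∀ P ∈ U, A s - A s' ∉ P := by
    intro s s' hne P hP hmem
    have hPp := hUprime P hP
    have hyP := hUy P hP
    have hex : ∃ n, s n ≠ s' n := by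
      by_contra h
      push_neg at h
      exact hne (funext h)
    set k := Nat.find hex with hk
    have hkne : s k ≠ s' k := Nat.find_spec hex
    have hklt : ∀ i < k, s i = s' i := fun i hi => by
      have := Nat.find_min hex hi
      simpa using this
    -- d := difference of the (k+1)-st partial sums
    set d : T := (if s k then y ^ (k + 2) else 0) - (if s' k then y ^ (k + 2) else 0) with hd
    have hsum : auxSum y s (k + 1) - auxSum y s' (k + 1) = d := by
      rw [auxSum, auxSum, Finset.sum_range_succ, Finset.sum_range_succ]
      have : ∀ i ∈ Finset.range k,
          (if s i then y ^ (i + 2) else 0) = (if s' i then y ^ (i + 2) else 0) := by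
        intro i hi
        rw [hklt i (Finset.mem_range.mp hi)]
      rw [Finset.sum_congr rfl this, hd]
      ring
    -- A s - A s' - d ∈ I^(k+3)
    have hrem : A s - A s' - d ∈ I ^ (k + 3) := by
      have h1 : A s - auxSum y s (k + 3) ∈ I ^ (k + 3) := hAsub s (k + 3)
      have h2 : A s' - auxSum y s' (k + 3) ∈ I ^ (k + 3) := hAsub s' (k + 3)
      have h3 : auxSum y s (k + 3) - auxSum y s (k + 1) ∈ I ^ (k + 3) := by
        have := auxSum_sub_mem y s (show k + 1 ≤ k + 3 by omega)
        exact this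
      have h4 : auxSum y s' (k + 3) - auxSum y s' (k + 1) ∈ I ^ (k + 3) := by
        have := auxSum_sub_mem y s' (show k + 1 ≤ k + 3 by omega)
        exact this
      have : A s - A s' - d
          = (A s - auxSum y s (k + 3)) - (A s' - auxSum y s' (k + 3))
            + (auxSum y s (k + 3) - auxSum y s (k + 1))
            - (auxSum y s' (k + 3) - auxSum y s' (k + 1))
            + (auxSum y s (k + 1) - auxSum y s' (k + 1) - d) := by ring
      rw [this, hsum]
      simpa using add_mem (sub_mem (add_mem (sub_mem h1 h2) h3) h4) (zero_mem _)
    rw [hI, Ideal.span_singleton_pow, Ideal.mem_span_singleton] at hrem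
    obtain ⟨c, hc⟩ := hrem
    -- d = ε * y^(k+2) with ε = ±1
    have hdval : d = y ^ (k + 2) ∨ d = -(y ^ (k + 2)) := by
      rcases Bool.eq_false_or_eq_true (s k) with h | h <;>
        rcases Bool.eq_false_or_eq_true (s' k) with h' | h' <;>
          simp [hd, h, h'] at hkne ⊢
    have hAeq : A s - A s' = d + y ^ (k + 3) * c := by rw [← hc]; ring
    have hfac : ∃ ε : T, (ε = 1 ∨ ε = -1) ∧ A s - A s' = y ^ (k + 2) * (ε + y * c) := by
      rcases hdval with h | h
      · exact ⟨1, Or.inl rfl, by rw [hAeq, h]; ring⟩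
      · exact ⟨-1, Or.inr rfl, by rw [hAeq, h]; ring⟩
    obtain ⟨ε, hε, heq⟩ := hfac
    rw [heq] at hmem
    have hyknP : y ^ (k + 2) ∉ P := fun hpow => hyP (hPp.mem_of_pow_mem _ hpow)
    have hunit : ε + y * c ∈ P := (hPp.mem_or_mem hmem).resolve_left hyknP
    have hPm : P ≤ maximalIdeal T := le_maximalIdeal hPp.ne_top
    have hεm : ε ∈ maximalIdeal T := by
      have hyc : y * c ∈ maximalIdeal T := Ideal.mul_mem_right _ _ hymem
      have := (maximalIdeal T).sub_mem (hPm hunit) hyc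
      simpa using this
    have h1m : (1 : T) ∈ maximalIdeal T := by
      rcases hε with rfl | rfl
      · exact hεm
      · simpa using (maximalIdeal T).neg_mem hεm
    exact (Ideal.ne_top_iff_one _).mp (IsLocalRing.maximalIdeal.isMaximal T).ne_top h1m
  -- the set of bad sequences is countable
  set bad : Set (ℕ → Bool) := ⋃ P ∈ U, {s | t - A s ∈ P} with hbad
  have hbadc : bad.Countable := by
    refine Set.Countable.biUnion hUcount fun P hP => ?_
    refine Set.Subsingleton.countable ?_
    intro s hs s' hs' 
    by_contra hne
    exact key s s' hne P hP (by
      have : A s - A s' = (t - A s') - (t - A s) := by ring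
      rw [this]
      exact P.sub_mem hs' hs)
  obtain ⟨s, hs⟩ : ∃ s : ℕ → Bool, s ∉ bad := by
    by_contra h
    push_neg at h
    exact aux_not_countable_bool (by
      have : (Set.univ : Set (ℕ → Bool)) ⊆ bad := fun s _ => h s
      exact hbadc.mono this)
  refine ⟨A s, ?_, ?_⟩
  · have h1 : A s - auxSum y s 2 ∈ I ^ 2 := hAsub s 2
    have h2 : auxSum y s 2 ∈ I ^ 2 := auxSum_mem y s 2
    have : A s ∈ I ^ 2 := by
      have := add_mem h1 h2
      simpa using this
    rwa [hI, Ideal.span_singleton_pow] at this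
  · intro P hP hmem
    exact hs (Set.mem_biUnion hP hmem)
end

section
/- Let S ↪ T be an extension of Krull domains and let F denote the field of fractions of S. Then: (1) if PT ≠ T for every height-one prime ideal P of S, then S ↪ T is weakly flat if and only if S = F ∩ T; (2) if S ↪ T is weakly flat, then the extension is height-one preserving and, moreover, for every height-one prime ideal P of S with PT ≠ T there is a height-one prime ideal Q of T with Q ∩ S = P. -/
noncomputable section

/-- The height of a prime ideal `P` of `R`, as the height of the corresponding point of the
prime spectrum. -/
noncomputable def primeHt {R : Type*} [CommRing R] (P : Ideal R) (hP : P.IsPrime) : ℕ∞ :=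
  Order.height (⟨P, hP⟩ : PrimeSpectrum R)

/-- A Krull domain: the localization at every height-one prime is a DVR, `R` is the
intersection of these localizations inside its fraction field (expressed elementwise), and
every nonzero element lies in only finitely many height-one primes. -/
def IsKrullDomain (R : Type*) [CommRing R] [IsDomain R] : Prop :=
  (∀ (P : Ideal R) (hP : P.IsPrime), primeHt P hP = 1 →
      haveI := hP
      haveI := IsLocalization.isDomain_of_local_atPrime hP
      IsDiscreteValuationRing (Localization.AtPrime P)) ∧
  (∀ x y : R, y ≠ 0 →
      (∀ (P : Ideal R) (hP : P.IsPrime), primeHt P hP = 1 → ∃ s ∉ P, s * x ∈ Ideal.span {y}) →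
      y ∣ x) ∧
  (∀ x : R, x ≠ 0 → {P : Ideal R | ∃ hP : P.IsPrime, primeHt P hP = 1 ∧ x ∈ P}.Finite)

/-- An extension of Krull domains is weakly flat if every height-one prime `P` of the base
with `P·T ≠ T` satisfies `PT ∩ S = P`. -/
def WeaklyFlat {S T : Type*} [CommRing S] [CommRing T] (f : S →+* T) : Prop :=
  ∀ (P : Ideal S) (hP : P.IsPrime), primeHt P hP = 1 → P.map f ≠ ⊤ → (P.map f).comap f = P

/-- An extension of Krull domains is height-one preserving if for every height-one prime `P`
of the base with `PT ≠ T` there exists a height-one prime `Q` of `T` with `PT ⊆ Q`. -/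
def HeightOnePreserving {S T : Type*} [CommRing S] [CommRing T] (f : S →+* T) : Prop :=
  ∀ (P : Ideal S) (hP : P.IsPrime), primeHt P hP = 1 → P.map f ≠ ⊤ →
    ∃ (Q : Ideal T) (hQ : Q.IsPrime), primeHt Q hQ = 1 ∧ P.map f ≤ Q

/-!
Everything is tested locally. At a height-one prime `P` of `S` the ring `S_P` is a DVR, and the
Krull property reduces divisibility in `S` (or `T`) to divisibility in all these localizations.

(1) If `f y ∣ f x` but `y ∤ x` in `S_P`, then `y = x d` with `d ∈ P S_P`; clearing denominators
puts an element of `S ∖ P` into `PT`. Conversely, if `P S_P = p S_P`, every element of `PT`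
becomes a multiple of `f p` after multiplying by some `f s` with `s ∉ P`, so for `a ∈ PT ∩ S`
descent of divisibility gives `p ∣ s a` in `S`, i.e. `a ∈ P`.

(2) Among the finitely many height-one primes of `T` containing `f p`, one contracts into `P`:
otherwise some `s ∉ P` lies in all of them, so `f p` divides a power of `f s` in `T`, forcing
`s ∈ PT ∩ S = P`. Since `p` generates `P` locally, that prime contracts to exactly `P`.
-/

theorem IsLocalization.algebraMap_dvd_algebraMap_iff {R : Type*} [CommRing R] (M : Submonoid R)
    (A : Type*) [CommRing A] [Algebra R A] [IsLocalization M A] {x y : R} :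
    algebraMap R A y ∣ algebraMap R A x ↔ ∃ s ∈ M, y ∣ s * x := by
  rw [← Ideal.mem_span_singleton, ← Set.image_singleton, ← Ideal.map_span,
    ← mk'_one (M := M) A x, mk'_mem_map_algebraMap_iff]
  simp only [Ideal.mem_span_singleton]

theorem Ideal.algebraMap_dvd_algebraMap_iff_atPrime {R : Type*} [CommRing R] (P : Ideal R)
    [P.IsPrime] {x y : R} :
    algebraMap R (Localization.AtPrime P) y ∣ algebraMap R (Localization.AtPrime P) x ↔
      ∃ s ∉ P, y ∣ s * x := by
  simp [IsLocalization.algebraMap_dvd_algebraMap_iff P.primeCompl]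

theorem ValuationRing.dvd_or_exists_mem_maximalIdeal {A : Type*} [CommRing A] [IsDomain A]
    [ValuationRing A] (a b : A) : a ∣ b ∨ ∃ d ∈ IsLocalRing.maximalIdeal A, b * d = a := by
  obtain hab | ⟨d, rfl⟩ := ValuationRing.dvd_total a b
  · exact Or.inl hab
  by_cases hd : IsUnit d
  · exact Or.inl ⟨↑hd.unit⁻¹, by simp [mul_assoc]⟩
  · exact Or.inr ⟨d, hd, rfl⟩

theorem IsDiscreteValuationRing.exists_dvd_pow_of_mem_maximalIdeal {A : Type*} [CommRing A]
    [IsDomain A] [IsDiscreteValuationRing A] {a b : A} (ha : a ≠ 0)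
    (hb : b ∈ IsLocalRing.maximalIdeal A) :
    ∃ n : ℕ, a ∣ b ^ n := by
  obtain ⟨ϖ, hϖ⟩ := exists_irreducible A
  obtain ⟨n, han⟩ := associated_pow_irreducible ha hϖ
  rw [hϖ.maximalIdeal_eq, Ideal.mem_span_singleton] at hb
  exact ⟨n, han.dvd.trans (pow_dvd_pow_of_dvd hb n)⟩

theorem Ideal.exists_uniformizer_of_isDiscreteValuationRing {R : Type*} [CommRing R] [IsDomain R]
    (P : Ideal R) [P.IsPrime] [IsDiscreteValuationRing (Localization.AtPrime P)] :
    ∃ p ∈ P, p ≠ 0 ∧ ∀ q ∈ P, ∃ s ∉ P, p ∣ s * q := by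
  set A := Localization.AtPrime P
  obtain ⟨ϖ, hϖ⟩ := IsDiscreteValuationRing.exists_irreducible A
  obtain ⟨⟨p, u⟩, hpu⟩ := IsLocalization.surj P.primeCompl ϖ
  have hirr : Irreducible (algebraMap R A p) := by
    rw [← hpu]
    exact (associated_mul_unit_right ϖ _ (IsLocalization.map_units A u)).irreducible hϖ
  have hpP : p ∈ P := (IsLocalization.AtPrime.to_map_mem_maximal_iff A P p).1 hirr.not_isUnit
  refine ⟨p, hpP, fun hp ↦ hirr.ne_zero (by simp [hp]), fun q hq ↦ ?_⟩
  rw [← P.algebraMap_dvd_algebraMap_iff_atPrime, ← Ideal.mem_span_singleton,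
    ← hirr.maximalIdeal_eq]
  exact (IsLocalization.AtPrime.to_map_mem_maximal_iff A P q).2 hq

section Krull

variable {R : Type*} [CommRing R] [IsDomain R]

theorem IsKrullDomain.dvd_of_forall_dvd_atPrime (hR : IsKrullDomain R) {x y : R} (hy : y ≠ 0)
    (h : ∀ (P : Ideal R) [hP : P.IsPrime], primeHt P hP = 1 →
      algebraMap R (Localization.AtPrime P) y ∣ algebraMap R (Localization.AtPrime P) x) :
    y ∣ x :=
  hR.2.1 x y hy fun P _ h1 ↦ by
    simpa [Ideal.mem_span_singleton] using P.algebraMap_dvd_algebraMap_iff_atPrime.1 (h P h1)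

theorem IsKrullDomain.exists_dvd_pow_of_forall_mem (hR : IsKrullDomain R) {a b : R} (ha : a ≠ 0)
    (hab : ∀ (Q : Ideal R) (hQ : Q.IsPrime), primeHt Q hQ = 1 → a ∈ Q → b ∈ Q) :
    ∃ n : ℕ, a ∣ b ^ n := by
  have hloc : ∀ Q : Ideal R, ∃ n : ℕ, ∀ [hQ : Q.IsPrime], primeHt Q hQ = 1 → a ∈ Q →
      algebraMap R (Localization.AtPrime Q) a ∣ algebraMap R (Localization.AtPrime Q) b ^ n := by
    intro Q
    by_cases hQ : ∃ hQ : Q.IsPrime, primeHt Q hQ = 1 ∧ a ∈ Q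
    · obtain ⟨hQ, h1, haQ⟩ := hQ
      have := hR.1 Q hQ h1
      have ha' : algebraMap R (Localization.AtPrime Q) a ≠ 0 :=
        (map_ne_zero_iff _ (IsLocalization.injective _ Q.primeCompl_le_nonZeroDivisors)).2 ha
      obtain ⟨n, hn⟩ := IsDiscreteValuationRing.exists_dvd_pow_of_mem_maximalIdeal ha'
        ((IsLocalization.AtPrime.to_map_mem_maximal_iff _ Q b).2 (hab Q hQ h1 haQ))
      exact ⟨n, fun _ _ ↦ hn⟩
    · exact ⟨0, fun h1 haQ ↦ (hQ ⟨_, h1, haQ⟩).elim⟩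
  choose n hn using hloc
  set F := (hR.2.2 a ha).toFinset
  refine ⟨∑ Q ∈ F, n Q, hR.dvd_of_forall_dvd_atPrime ha fun Q hQ h1 ↦ ?_⟩
  by_cases haQ : a ∈ Q
  · have hQF : Q ∈ F := (hR.2.2 a ha).mem_toFinset.2 ⟨hQ, h1, haQ⟩
    rw [map_pow]
    exact (hn Q h1 haQ).trans (pow_dvd_pow _ (Finset.single_le_sum (by simp) hQF))
  · exact ((IsLocalization.AtPrime.isUnit_to_map_iff _ Q a).2 haQ).dvd

end Krull

section Extension

variable {S T : Type*} [CommRing S] [CommRing T] (f : S →+* T)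

theorem Ideal.le_comap_of_comap_le {P : Ideal S} {Q : Ideal T} [Q.IsPrime] {p : S}
    (hgen : ∀ q ∈ P, ∃ s ∉ P, p ∣ s * q) (hpQ : f p ∈ Q) (hQP : Q.comap f ≤ P) :
    P ≤ Q.comap f := by
  intro q hq
  obtain ⟨s, hs, hpsq⟩ := hgen q hq
  have hsq : f s * f q ∈ Q := by
    rw [← map_mul]
    exact Q.mem_of_dvd (map_dvd f hpsq) hpQ
  exact (IsPrime.mem_or_mem ‹_› hsq).resolve_left fun h ↦ hs (hQP h)

theorem Ideal.comap_map_eq_of_dvd_of_map_dvd (hdesc : ∀ x y : S, y ≠ 0 → f y ∣ f x → y ∣ x)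
    {P : Ideal S} [P.IsPrime] {p : S} (hp : p ∈ P) (hp0 : p ≠ 0)
    (hgen : ∀ q ∈ P, ∃ s ∉ P, p ∣ s * q) : (P.map f).comap f = P := by
  -- `J` is the contraction of `f p · T_M`, where `M = f (S ∖ P)`; it contains `PT` as `p`
  -- generates `P S_P`.
  let M := P.primeCompl.map f
  let J := (span {algebraMap T (Localization M) (f p)}).comap (algebraMap T (Localization M))
  have hPJ : P.map f ≤ J := by
    rw [map_le_iff_le_comap]
    intro q hq
    obtain ⟨s, hs, hpsq⟩ := hgen q hq
    simp only [J, mem_comap, mem_span_singleton, IsLocalization.algebraMap_dvd_algebraMap_iff M]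
    exact ⟨f s, Submonoid.mem_map_of_mem _ hs, by rw [← map_mul]; exact map_dvd f hpsq⟩
  refine le_antisymm (fun a ha ↦ ?_) le_comap_map
  obtain ⟨_, ⟨s, hs, rfl⟩, hdvd⟩ :=
    (IsLocalization.algebraMap_dvd_algebraMap_iff M _).1 (mem_span_singleton.1 (hPJ ha))
  rw [← map_mul] at hdvd
  exact (IsPrime.mem_or_mem ‹_› (P.mem_of_dvd (hdesc _ _ hp0 hdvd) hp)).resolve_left hs

variable [IsDomain T] {f}

theorem Ideal.exists_primeHt_one_comap_eq (hT : IsKrullDomain T) (hf : Function.Injective f)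
    {P : Ideal S} [hP : P.IsPrime] {p : S} (hp : p ∈ P) (hp0 : p ≠ 0)
    (hgen : ∀ q ∈ P, ∃ s ∉ P, p ∣ s * q) (hPT : (P.map f).comap f = P) :
    ∃ (Q : Ideal T) (hQ : Q.IsPrime), primeHt Q hQ = 1 ∧ Q.comap f = P := by
  have hfp : f p ≠ 0 := (map_ne_zero_iff f hf).2 hp0
  set F := (hT.2.2 (f p) hfp).toFinset
  obtain ⟨Q, hQF, hQP⟩ : ∃ Q ∈ F, Q.comap f ≤ P := by
    rw [← hP.inf_le']
    intro s hs
    have hsF : ∀ Q ∈ F, f s ∈ Q := fun Q hQ ↦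
      SetLike.le_def.1 (Finset.inf_le (f := fun Q ↦ Q.comap f) hQ) hs
    obtain ⟨n, hn⟩ := hT.exists_dvd_pow_of_forall_mem hfp fun Q hQ h1 hpQ ↦
      hsF Q ((hT.2.2 (f p) hfp).mem_toFinset.2 ⟨hQ, h1, hpQ⟩)
    rw [← map_pow] at hn
    have hsn : s ^ n ∈ (P.map f).comap f :=
      (P.map f).mem_of_dvd hn (Ideal.mem_map_of_mem f hp)
    exact hP.mem_of_pow_mem n (hPT ▸ hsn)
  obtain ⟨hQ, h1, hpQ⟩ := (hT.2.2 (f p) hfp).mem_toFinset.1 hQF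
  exact ⟨Q, hQ, h1, le_antisymm hQP (Ideal.le_comap_of_comap_le f hgen hpQ hQP)⟩

variable [IsDomain S]

theorem algebraMap_dvd_atPrime_of_map_dvd (hf : Function.Injective f) {P : Ideal S} [P.IsPrime]
    [ValuationRing (Localization.AtPrime P)] (hP : (P.map f).comap f = P) {x y : S} (hy : y ≠ 0)
    (hxy : f y ∣ f x) :
    algebraMap S (Localization.AtPrime P) y ∣ algebraMap S (Localization.AtPrime P) x := by
  set A := Localization.AtPrime P
  refine (ValuationRing.dvd_or_exists_mem_maximalIdeal _ _).resolve_right ?_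
  rintro ⟨d, hd, hxd⟩
  obtain ⟨⟨c, u⟩, hcu⟩ := IsLocalization.surj P.primeCompl d
  dsimp only at hcu
  have hc : c ∈ P :=
    (IsLocalization.AtPrime.to_map_mem_maximal_iff A P c).1 (hcu ▸ Ideal.mul_mem_right _ _ hd)
  have hxcyu : x * c = y * u := IsLocalization.injective A P.primeCompl_le_nonZeroDivisors <| by
    rw [map_mul, map_mul, ← hcu, ← hxd]
    ring
  obtain ⟨t, ht⟩ := hxy
  have hfu : f u = t * f c := by
    refine mul_left_cancel₀ ((map_ne_zero_iff f hf).2 hy) ?_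
    rw [← map_mul, ← hxcyu, map_mul, ht]
    ring
  have hu : (u : S) ∈ (P.map f).comap f := by
    rw [Ideal.mem_comap, hfu]
    exact Ideal.mul_mem_left _ _ (Ideal.mem_map_of_mem f hc)
  rw [hP] at hu
  exact u.2 hu

end Extension

/-- Let `S ↪ T` be an extension of Krull domains and `F` the field of fractions of `S`.
(1) If `PT ≠ T` for every height-one prime `P` of `S`, then `S ↪ T` is weakly flat if and
only if `S = F ∩ T` (expressed elementwise: every element of `T` of the form `f x / f y`
with `x, y ∈ S`, `y ≠ 0`, already lies in `S`, i.e. `y ∣ x` in `S`).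
(2) If `S ↪ T` is weakly flat, then the extension is height-one preserving and, moreover,
for every height-one prime `P` of `S` with `PT ≠ T` there is a height-one prime `Q` of `T`
with `Q ∩ S = P`. -/
theorem stmt_12 {S T : Type*} [CommRing S] [CommRing T] [IsDomain S] [IsDomain T]
    (hS : IsKrullDomain S) (hT : IsKrullDomain T)
    (f : S →+* T) (hf : Function.Injective f) :
    ((∀ (P : Ideal S) (hP : P.IsPrime), primeHt P hP = 1 → P.map f ≠ ⊤) →
      (WeaklyFlat f ↔ ∀ x y : S, y ≠ 0 → (∃ t : T, t * f y = f x) → y ∣ x)) ∧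
    (WeaklyFlat f →
      (HeightOnePreserving f ∧
        ∀ (P : Ideal S) (hP : P.IsPrime), primeHt P hP = 1 → P.map f ≠ ⊤ →
          ∃ (Q : Ideal T) (hQ : Q.IsPrime), primeHt Q hQ = 1 ∧ Q.comap f = P)) := by
  have hdvd_iff (x y : S) : (∃ t : T, t * f y = f x) ↔ f y ∣ f x := by
    simp only [dvd_iff_exists_eq_mul_left, eq_comm]
  have hcontract (hwf : WeaklyFlat f) (P : Ideal S) (hP : P.IsPrime) (h1 : primeHt P hP = 1)
      (hPT : P.map f ≠ ⊤) :
      ∃ (Q : Ideal T) (hQ : Q.IsPrime), primeHt Q hQ = 1 ∧ Q.comap f = P := by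
    have := hS.1 P hP h1
    obtain ⟨p, hp, hp0, hgen⟩ := P.exists_uniformizer_of_isDiscreteValuationRing
    exact Ideal.exists_primeHt_one_comap_eq hT hf hp hp0 hgen (hwf P hP h1 hPT)
  refine ⟨fun hPT ↦ ⟨fun hwf x y hy hxy ↦ ?_, fun hdesc P hP h1 _ ↦ ?_⟩,
    fun hwf ↦ ⟨fun P hP h1 hPT ↦ ?_, hcontract hwf⟩⟩
  · refine hS.dvd_of_forall_dvd_atPrime hy fun P hP h1 ↦ ?_
    have := hS.1 P hP h1
    exact algebraMap_dvd_atPrime_of_map_dvd hf (hwf P hP h1 (hPT P hP h1)) hy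
      ((hdvd_iff x y).1 hxy)
  · have := hS.1 P hP h1
    obtain ⟨p, hp, hp0, hgen⟩ := P.exists_uniformizer_of_isDiscreteValuationRing
    exact P.comap_map_eq_of_dvd_of_map_dvd f (fun x y hy ↦ hdesc x y hy ∘ (hdvd_iff x y).2)
      hp hp0 hgen
  · obtain ⟨Q, hQ, h1Q, hQP⟩ := hcontract hwf P hP h1 hPT
    exact ⟨Q, hQ, h1Q, Ideal.map_le_iff_le_comap.2 hQP.ge⟩

end
end
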